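/- arXiv:2602.15266 — 2 statements merged into one kernel-verified Lean document; each statement's English description precedes it below -/
import Mathlib

section
/- The unique critical point p* of f(p) = -(1-p)·ln(1-p) + ln(p) in (0,1) satisfies 0.88 < p* < 0.89. -/
/-!
The hypothesis says `critFun p* = 0`, and `critFun` is strictly decreasing on `(0, 1)`, so it
suffices that `critFun 0.88 > 0 > critFun 0.89`, i.e. `log 0.12 > -47/22` and
`log 0.11 < -189/89`. Both follow from `e ^ 2 ∈ (7.34, 7.4)` and `exp x ≥ 1 + x` applied to the
small offsets `3/22` and `-11/89` from `2`.
-/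

open Real Set

/-- `f'` for `f p = -(1 - p) * log (1 - p) + log p`. -/
noncomputable def critFun (p : ℝ) : ℝ := 1 + log (1 - p) + 1 / p

lemma strictAntiOn_critFun : StrictAntiOn critFun (Ioo 0 1) := by
  intro a ⟨ha0, _⟩ b ⟨_, hb1⟩ hab
  have hlog : log (1 - b) < log (1 - a) := log_lt_log (by linarith) (by linarith)
  have hinv : 1 / b < 1 / a := one_div_lt_one_div_of_lt ha0 hab
  unfold critFun
  linarith

lemma exp_two_gt : (7.34 : ℝ) < exp 2 := by
  rw [show (2 : ℝ) = (2 : ℕ) by norm_num, ← exp_one_pow]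
  calc (7.34 : ℝ) < 2.7182818283 ^ 2 := by norm_num
    _ < exp 1 ^ 2 := by gcongr; exact exp_one_gt_d9

lemma exp_two_lt : exp 2 < (7.4 : ℝ) := by
  rw [show (2 : ℝ) = (2 : ℕ) by norm_num, ← exp_one_pow]
  calc exp 1 ^ 2 < 2.7182818286 ^ 2 := by gcongr; exact exp_one_lt_d9
    _ < 7.4 := by norm_num

lemma critFun_pos_at_088 : 0 < critFun 0.88 := by
  have hexp : (25 / 3 : ℝ) < exp (47 / 22) :=
    calc (25 / 3 : ℝ) < exp 2 * (3 / 22 + 1) := by linarith [exp_two_gt]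
      _ ≤ exp 2 * exp (3 / 22) := by gcongr; exact add_one_le_exp _
      _ = exp (47 / 22) := by rw [← exp_add]; norm_num
  have hlog : log (25 / 3) < 47 / 22 := (log_lt_iff_lt_exp (by norm_num)).2 hexp
  have hsub : (1 - 0.88 : ℝ) = (25 / 3)⁻¹ := by norm_num
  unfold critFun
  rw [hsub, log_inv]
  norm_num
  linarith

lemma critFun_neg_at_089 : critFun 0.89 < 0 := by
  have hexp : (0.11 : ℝ) < exp (-189 / 89) :=
    calc (0.11 : ℝ) < (-(11 / 89) + 1) / exp 2 := by
          rw [lt_div_iff₀ (exp_pos 2)]; linarith [exp_two_lt]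
      _ ≤ exp (-(11 / 89)) / exp 2 := by gcongr; exact add_one_le_exp _
      _ = exp (-189 / 89) := by rw [← exp_sub]; norm_num
  have hlog : log 0.11 < -189 / 89 := (log_lt_iff_lt_exp (by norm_num)).2 hexp
  unfold critFun
  norm_num
  linarith

theorem stmt_8 (pstar : ℝ) (hps : pstar ∈ Set.Ioo (0:ℝ) 1)
    (hcrit : 1 + Real.log (1 - pstar) + 1 / pstar = 0) :
    0.88 < pstar ∧ pstar < 0.89 := by
  have hzero : critFun pstar = 0 := hcrit
  have h088 : (0.88 : ℝ) ∈ Ioo 0 1 := by norm_num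
  have h089 : (0.89 : ℝ) ∈ Ioo 0 1 := by norm_num
  constructor
  · rw [← strictAntiOn_critFun.lt_iff_gt hps h088, hzero]
    exact critFun_pos_at_088
  · rw [← strictAntiOn_critFun.lt_iff_gt h089 hps, hzero]
    exact critFun_neg_at_089
end

section
/- The golden-ratio partition point lies strictly below the maximizer of the balance function: if p* ∈ (0,1) satisfies 1 + ln(1-p*) + 1/p* = 0, then (√5 - 1)/2 < p*. -/
/-!
Bounding `log (1 - p)` below by `1 - 1 / (1 - p)` gives
`1 + log (1 - p) + 1 / p ≥ (1 - 2 p²) / (p (1 - p))`, which is positive for `0 < p < 1 / √2`.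
Hence any zero `p*` satisfies `p*² ≥ 1 / 2`, while the golden ratio conjugate `q` has
`q² = 1 - q < 1 / 2`.
-/

open Real

noncomputable def balance (p : ℝ) : ℝ := 1 + log (1 - p) + 1 / p

lemma balance_pos {p : ℝ} (hp : 0 < p) (hp2 : 2 * p ^ 2 < 1) : 0 < balance p := by
  have hp1 : 0 < 1 - p := by nlinarith
  have hlog : 1 - (1 - p)⁻¹ ≤ log (1 - p) := one_sub_inv_le_log_of_pos hp1
  have hkey : 0 < 2 + 1 / p - 1 / (1 - p) := by
    have : 2 + 1 / p - 1 / (1 - p) = (1 - 2 * p ^ 2) / (p * (1 - p)) := by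
      field_simp
      ring
    rw [this]
    exact div_pos (by linarith) (mul_pos hp hp1)
  unfold balance
  rw [inv_eq_one_div] at hlog
  linarith

lemma two_mul_goldenConj_sq_lt_one : 2 * ((√5 - 1) / 2) ^ 2 < 1 := by
  have h5 : √5 ^ 2 = 5 := sq_sqrt (by norm_num)
  have h2 : 2 < √5 := by nlinarith [sqrt_nonneg 5]
  nlinarith

theorem stmt_19 (pstar : ℝ) (hps : pstar ∈ Set.Ioo (0:ℝ) 1)
    (hcrit : 1 + Real.log (1 - pstar) + 1 / pstar = 0) :
    (Real.sqrt 5 - 1) / 2 < pstar := by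
  by_contra! hle
  have hsq : 2 * pstar ^ 2 < 1 :=
    lt_of_le_of_lt (by gcongr; exact hps.1.le) two_mul_goldenConj_sq_lt_one
  exact (balance_pos hps.1 hsq).ne' hcrit
end
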